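/- arXiv:1612.05814 — 2 statements merged into one kernel-verified Lean document; each statement's English description precedes it below -/
import Mathlib

section
/- The map cl : X^N → X^N defined by cl(∅,P) = (∅,P) for every partition P, and cl(A,P) = (Ā, P ∨ P^A_⊥) for nonempty A (where Ā is the block of P ∨ P^A_⊥ containing A) is a closure operator on the product lattice X^N: for all (A,P),(B,Q) ∈ X^N it satisfies (i) cl(A,P) ⊒ (A,P), (ii) (A,P) ⊒ (B,Q) implies cl(A,P) ⊒ cl(B,Q), and (iii) cl(cl(A,P)) = cl(A,P). -/
open scoped BigOperators

/-- `modp n A` is the modular partition `P^A_⊥` of `Fin n` whose unique (possibly)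
non-singleton block is `A`, all other blocks being singletons. -/
def modp (n : ℕ) (A : Set (Fin n)) : Setoid (Fin n) where
  r x y := x = y ∨ (x ∈ A ∧ y ∈ A)
  iseqv := by
    refine ⟨fun _ => Or.inl rfl, ?_, ?_⟩
    · rintro x y (rfl | ⟨hx, hy⟩)
      · exact Or.inl rfl
      · exact Or.inr ⟨hy, hx⟩
    · rintro x y z (rfl | ⟨hx, hy⟩) h
      · exact h
      · rcases h with rfl | ⟨hy', hz⟩
        · exact Or.inr ⟨hx, hy⟩
        · exact Or.inr ⟨hx, hz⟩

/-- The product `X^N = 2^N × 𝒫^N` of the subset lattice and the partition lattice,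
ordered componentwise. -/
abbrev XN (n : ℕ) := Set (Fin n) × Setoid (Fin n)

/-- The closure operator `cl` on `X^N`:  `cl(∅,P) = (∅,P)` and, for `A ≠ ∅`,
`cl(A,P) = (Ā, P ⊔ P^A_⊥)` where `Ā` is the block of `P ⊔ P^A_⊥` containing `A`. -/
def EmbClosure (n : ℕ) (x : XN n) : XN n :=
  ({y | ∃ a ∈ x.1, (x.2 ⊔ modp n x.1) y a}, x.2 ⊔ modp n x.1)

/-- An embedded subset is a pair that coincides with its closure. -/
def IsEmbedded (n : ℕ) (x : XN n) : Prop := EmbClosure n x = x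

/-- The lattice `ℰ^N` of embedded subsets, with the induced order. -/
abbrev Emb (n : ℕ) := {x : XN n // IsEmbedded n x}

lemma modp_le_of_subsingleton {n : ℕ} {A : Set (Fin n)} (h : A.Subsingleton)
    (Q : Setoid (Fin n)) : modp n A ≤ Q := by
  rw [Setoid.le_def]
  intro x y hxy
  rcases hxy with rfl | ⟨hx, hy⟩
  · exact Q.refl' x
  · obtain rfl := h hx hy
    exact Q.refl' x

lemma modp_eq_bot_of_subsingleton {n : ℕ} {A : Set (Fin n)} (h : A.Subsingleton) :
    modp n A = ⊥ :=
  le_antisymm (modp_le_of_subsingleton h ⊥) bot_le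

lemma embedded_empty (n : ℕ) (Q : Setoid (Fin n)) : IsEmbedded n (∅, Q) := by
  unfold IsEmbedded EmbClosure
  refine Prod.ext ?_ ?_
  · simp
  · simpa using sup_eq_left.mpr (modp_le_of_subsingleton Set.subsingleton_empty Q)

lemma embedded_univ_top (n : ℕ) : IsEmbedded n (Set.univ, ⊤) := by
  unfold IsEmbedded EmbClosure
  refine Prod.ext ?_ ?_
  · ext y
    simp only [Set.mem_setOf_eq, Set.mem_univ, iff_true]
    exact ⟨y, trivial, Setoid.refl' _ y⟩
  · exact sup_eq_left.mpr le_top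

lemma embedded_singleton (n : ℕ) (i : Fin n) : IsEmbedded n ({i}, ⊥) := by
  have hb : modp n ({i} : Set (Fin n)) = ⊥ :=
    modp_eq_bot_of_subsingleton Set.subsingleton_singleton
  unfold IsEmbedded EmbClosure
  refine Prod.ext ?_ ?_
  · ext y
    simp only [Set.mem_setOf_eq, hb, sup_idem, Set.mem_singleton_iff]
    constructor
    · rintro ⟨a, ha, hrel⟩
      subst ha
      change ((⊥ : Setoid (Fin n)) ⊔ modp n {_}) y _ at hrel
      rw [hb, sup_idem] at hrel
      simpa [Setoid.bot_def] using hrel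
    · rintro rfl
      exact ⟨y, rfl, Setoid.refl' _ y⟩
  · simp [hb]

/-- The bottom element `(∅, P_⊥)` of `ℰ^N`. -/
def botE (n : ℕ) : Emb n := ⟨(∅, ⊥), embedded_empty n ⊥⟩

/-- The top element `(N, P^⊤)` of `ℰ^N`. -/
def topE (n : ℕ) : Emb n := ⟨(Set.univ, ⊤), embedded_univ_top n⟩

/-- The atom `({i}, P_⊥)` of `ℰ^N`. -/
def atomS (n : ℕ) (i : Fin n) : Emb n := ⟨({i}, ⊥), embedded_singleton n i⟩

/-- The atom `(∅, [ij])` of `ℰ^N`, where `[ij]` is the atom of the partition lattice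
whose unique non-singleton block is the pair `{i, j}`. -/
def atomP (n : ℕ) (i j : Fin n) : Emb n := ⟨(∅, modp n {i, j}), embedded_empty n _⟩

/-- A pair is an atom candidate: of the form `({i},P_⊥)` or `(∅,[ij])` with `i ≠ j`. -/
def IsAtomPair (n : ℕ) (a : XN n) : Prop :=
  (∃ i : Fin n, a = ({i}, ⊥)) ∨ ∃ i j : Fin n, i ≠ j ∧ a = (∅, modp n {i, j})

/-- The number of blocks `|P|` of a partition. -/
noncomputable def numBlocks {α : Type*} (P : Setoid α) : ℕ := P.classes.ncard

/-- The rank function `r(A,P) = (n − |P|) + min{|A|,1}` of `ℰ^N`. -/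
noncomputable def erank (n : ℕ) (x : XN n) : ℕ := (n - numBlocks x.2) + min x.1.ncard 1

/-- The partition `Q^S` of `S` induced by a partition `Q` of `N`. -/
def indPart {n : ℕ} (S : Set (Fin n)) (Q : Setoid (Fin n)) : Setoid S :=
  Setoid.comap Subtype.val Q

/-- `mu` is the Möbius function of the (finite) poset `α`. -/
def IsMobius {α : Type*} [PartialOrder α] (mu : α → α → ℤ) : Prop :=
  (∀ x, mu x x = 1) ∧
  (∀ x y, ¬x ≤ y → mu x y = 0) ∧
  (∀ x y, x < y → mu x y = -∑ᶠ z ∈ Set.Ico x y, mu x z)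

def blockHull {α : Type*} (R : Setoid α) (A : Set α) : Set α := {y | ∃ a ∈ A, R y a}

section blockHull

variable {α : Type*} {R S : Setoid α} {A B : Set α}

lemma subset_blockHull : A ⊆ blockHull R A := fun a ha => ⟨a, ha, R.refl' a⟩

lemma blockHull_mono (hRS : R ≤ S) (hAB : A ⊆ B) : blockHull R A ⊆ blockHull S B := by
  rintro y ⟨a, ha, hya⟩
  exact ⟨a, hAB ha, hRS hya⟩

lemma blockHull_blockHull : blockHull R (blockHull R A) = blockHull R A := by
  refine subset_antisymm ?_ subset_blockHull
  rintro z ⟨y, ⟨a, ha, hya⟩, hzy⟩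
  exact ⟨a, ha, R.trans' hzy hya⟩

end blockHull

section ModularPartition

variable {n : ℕ} {R : Setoid (Fin n)} {A B : Set (Fin n)}

lemma modp_le_iff : modp n A ≤ R ↔ ∀ a ∈ A, ∀ b ∈ A, R a b := by
  refine ⟨fun h a ha b hb => h (Or.inr ⟨ha, hb⟩), fun h => ?_⟩
  rintro u v (rfl | ⟨hu, hv⟩)
  · exact R.refl' u
  · exact h u hu v hv

lemma modp_mono (h : A ⊆ B) : modp n A ≤ modp n B := by
  rintro u v (rfl | ⟨hu, hv⟩)
  · exact Or.inl rfl
  · exact Or.inr ⟨h hu, h hv⟩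

lemma modp_blockHull_le (h : modp n A ≤ R) : modp n (blockHull R A) ≤ R := by
  rw [modp_le_iff] at h ⊢
  rintro u ⟨a, ha, hua⟩ v ⟨b, hb, hvb⟩
  exact R.trans' hua (R.trans' (h a ha b hb) (R.symm' hvb))

end ModularPartition

section ClosureOperator

variable {n : ℕ}

lemma embClosure_eq (x : XN n) :
    EmbClosure n x = (blockHull (x.2 ⊔ modp n x.1) x.1, x.2 ⊔ modp n x.1) := rfl

lemma le_embClosure (x : XN n) : x ≤ EmbClosure n x :=
  ⟨subset_blockHull, le_sup_left⟩

lemma embClosure_mono {x y : XN n} (h : y ≤ x) : EmbClosure n y ≤ EmbClosure n x := by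
  have hR : y.2 ⊔ modp n y.1 ≤ x.2 ⊔ modp n x.1 := sup_le_sup h.2 (modp_mono h.1)
  exact ⟨blockHull_mono hR h.1, hR⟩

lemma embClosure_idem (x : XN n) : EmbClosure n (EmbClosure n x) = EmbClosure n x := by
  set R := x.2 ⊔ modp n x.1
  have hR : R ⊔ modp n (blockHull R x.1) = R :=
    sup_eq_left.mpr (modp_blockHull_le le_sup_right)
  rw [embClosure_eq x, embClosure_eq, hR, blockHull_blockHull]

end ClosureOperator

theorem embClosure_isClosureOperator_general (n : ℕ) :
    ∀ x y : XN n,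
      (x ≤ EmbClosure n x) ∧
      (y ≤ x → EmbClosure n y ≤ EmbClosure n x) ∧
      (EmbClosure n (EmbClosure n x) = EmbClosure n x) :=
  fun x _ => ⟨le_embClosure x, embClosure_mono, embClosure_idem x⟩

theorem embClosure_isClosureOperator (n : ℕ) (hn : 1 ≤ n) :
    ∀ x y : XN n,
      (x ≤ EmbClosure n x) ∧
      (y ≤ x → EmbClosure n y ≤ EmbClosure n x) ∧
      (EmbClosure n (EmbClosure n x) = EmbClosure n x) :=
  embClosure_isClosureOperator_general n
end

section
/- The Whitney numbers of the second kind of ℰ^n are the Stirling numbers of the second kind shifted by one: for 0 ≤ k ≤ n, the number of embedded subsets (A,P) ∈ ℰ^N of rank k equals S_{n+1, n+1−k}, the number of partitions of an (n+1)-set into n+1−k blocks. -/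
open scoped BigOperators

/-! The map `(A, P) ↦ Q`, where `Q` is the partition of `{0, …, n}` obtained from `P` by adding
the new point `0` to the block `A` (or as a singleton block when `A = ∅`), is a bijection from
`ℰ^N` onto the partitions of an `(n+1)`-set; its inverse deletes `0`. Adding `0` creates a new
block exactly when `A = ∅`, so `|Q| = |P| + 1 - min{|A|, 1} = n + 1 - r(A, P)`. -/

namespace Setoid

variable {α : Type*}

theorem setOf_rel_eq_setOf_rel_iff (P : Setoid α) (i j : α) :
    {y | P y i} = {y | P y j} ↔ P i j := by
  refine ⟨fun h => (h ▸ P.refl' i : i ∈ {y | P y j}), fun h => Set.ext fun y => ?_⟩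
  exact ⟨fun hy => P.trans' hy h, fun hy => P.trans' hy (P.symm' h)⟩

theorem ker_setOf_rel (P : Setoid α) : Setoid.ker (fun i => {y | P y i}) = P :=
  Setoid.ext P.setOf_rel_eq_setOf_rel_iff

theorem range_setOf_rel (P : Setoid α) : Set.range (fun i => {y | P y i}) = P.classes := by
  ext s
  exact ⟨fun ⟨i, hi⟩ => ⟨i, hi.symm⟩, fun ⟨i, hi⟩ => ⟨i, hi.symm⟩⟩

end Setoid

theorem numBlocks_ker {α β : Type*} (f : α → β) :
    numBlocks (Setoid.ker f) = (Set.range f).ncard := by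
  rw [numBlocks, ← Nat.card_coe_set_eq, ← Nat.card_coe_set_eq]
  exact (Nat.card_congr (Setoid.quotientEquivClasses _)).symm.trans
    (Nat.card_congr (Setoid.quotientKerEquivRange f))

theorem numBlocks_le_card {α : Type*} [Finite α] (P : Setoid α) :
    numBlocks P ≤ Nat.card α := by
  rw [← P.ker_setOf_rel, numBlocks_ker, ← Nat.card_coe_set_eq]
  exact Finite.card_range_le _

variable {n : ℕ}

theorem modp_le_iff_s14 {A : Set (Fin n)} {P : Setoid (Fin n)} :
    modp n A ≤ P ↔ ∀ x ∈ A, ∀ y ∈ A, P x y := by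
  refine ⟨fun h x hx y hy => h (Or.inr ⟨hx, hy⟩), fun h x y => ?_⟩
  rintro (rfl | ⟨hx, hy⟩)
  exacts [P.refl' x, h x hx y hy]

theorem isEmbedded_iff {A : Set (Fin n)} {P : Setoid (Fin n)} :
    IsEmbedded n (A, P) ↔ A = ∅ ∨ A ∈ P.classes := by
  constructor
  · intro h
    rcases A.eq_empty_or_nonempty with hA | ⟨a, ha⟩
    · exact Or.inl hA
    have hle : modp n A ≤ P := sup_eq_left.mp (congrArg Prod.snd h)
    have hcl : {y | ∃ a ∈ A, (P ⊔ modp n A) y a} = A := congrArg Prod.fst h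
    refine Or.inr ⟨a, Set.ext fun y => ⟨fun hy => hle (Or.inr ⟨hy, ha⟩), fun hy => ?_⟩⟩
    rw [← hcl]
    exact ⟨a, ha, le_sup_left (a := P) hy⟩
  · rintro (rfl | ⟨a, rfl⟩)
    · exact embedded_empty n P
    have hsup : P ⊔ modp n {y | P y a} = P :=
      sup_eq_left.mpr (modp_le_iff_s14.mpr fun x hx y hy => P.trans' hx (P.symm' hy))
    refine Prod.ext (Set.ext fun y => ?_) hsup
    change (∃ b ∈ _, (P ⊔ modp n {y | P y a}) y b) ↔ P y a
    rw [hsup]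
    exact ⟨fun ⟨b, hb, hyb⟩ => P.trans' hyb hb, fun hy => ⟨y, hy, P.refl' y⟩⟩

/-- `0` is the adjoined point and `i.succ` stands for `i ∈ N`. -/
def blockOf (x : XN n) : Fin (n + 1) → Set (Fin n) :=
  Fin.cons x.1 fun i => {y | x.2 y i}

def adjoinZero (x : XN n) : Setoid (Fin (n + 1)) := Setoid.ker (blockOf x)

def deleteZero (Q : Setoid (Fin (n + 1))) : XN n :=
  ({i | Q i.succ 0}, Setoid.comap Fin.succ Q)

theorem isEmbedded_deleteZero (Q : Setoid (Fin (n + 1))) : IsEmbedded n (deleteZero Q) := by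
  rw [deleteZero, isEmbedded_iff]
  rcases Set.eq_empty_or_nonempty {i : Fin n | Q i.succ 0} with hA | ⟨a, ha⟩
  · exact Or.inl hA
  refine Or.inr ⟨a, Set.ext fun y => ?_⟩
  exact ⟨fun hy => Q.trans' hy (Q.symm' ha), fun hy => Q.trans' hy ha⟩

theorem deleteZero_adjoinZero {x : XN n} (hx : IsEmbedded n x) :
    deleteZero (adjoinZero x) = x := by
  obtain ⟨A, P⟩ := x
  refine Prod.ext (Set.ext fun i => ?_) ?_
  · change {y | P y i} = A ↔ i ∈ A
    rcases isEmbedded_iff.mp hx with rfl | ⟨a, rfl⟩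
    · exact iff_of_false (fun h => (h ▸ P.refl' i : i ∈ (∅ : Set (Fin n)))) id
    · exact P.setOf_rel_eq_setOf_rel_iff i a
  · exact Setoid.ext P.setOf_rel_eq_setOf_rel_iff

theorem blockOf_deleteZero (Q : Setoid (Fin (n + 1))) (z : Fin (n + 1)) :
    blockOf (deleteZero Q) z = {y | Q y.succ z} := by
  cases z using Fin.cases <;> rfl

theorem adjoinZero_deleteZero (Q : Setoid (Fin (n + 1))) : adjoinZero (deleteZero Q) = Q := by
  -- only the block of `0` can miss `1, …, n`, so the traces on `1, …, n` separate the blocks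
  have key : ∀ (i : Fin n) z, {y : Fin n | Q y.succ i.succ} = {y | Q y.succ z} → Q i.succ z :=
    fun i z h => (h ▸ Q.refl' i.succ : i ∈ {y | Q y.succ z})
  refine Setoid.ext fun z w => ?_
  rw [adjoinZero, Setoid.ker_def, blockOf_deleteZero, blockOf_deleteZero]
  refine ⟨fun h => ?_, fun h => Set.ext fun y =>
    ⟨fun hy => Q.trans' hy h, fun hy => Q.trans' hy (Q.symm' h)⟩⟩
  cases z using Fin.cases with
  | succ i => exact key i w h
  | zero =>
    cases w using Fin.cases with
    | zero => exact Q.refl' 0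
    | succ j => exact Q.symm' (key j 0 h.symm)

noncomputable def embEquiv (n : ℕ) : Emb n ≃ Setoid (Fin (n + 1)) where
  toFun x := adjoinZero x.val
  invFun Q := ⟨deleteZero Q, isEmbedded_deleteZero Q⟩
  left_inv x := Subtype.ext (deleteZero_adjoinZero x.2)
  right_inv := adjoinZero_deleteZero

theorem numBlocks_adjoinZero (x : XN n) :
    numBlocks (adjoinZero x) = (insert x.1 x.2.classes).ncard := by
  rw [adjoinZero, numBlocks_ker, blockOf, Fin.range_cons, Setoid.range_setOf_rel]

theorem numBlocks_adjoinZero_add_erank {x : XN n} (hx : IsEmbedded n x) :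
    numBlocks (adjoinZero x) + erank n x = n + 1 := by
  obtain ⟨A, P⟩ := x
  have hle : numBlocks P ≤ n := by simpa using numBlocks_le_card P
  rw [numBlocks_adjoinZero, erank]
  rcases isEmbedded_iff.mp hx with rfl | hA
  · rw [Set.ncard_insert_of_notMem Setoid.empty_notMem_classes]
    simp only [numBlocks, Set.ncard_empty] at hle ⊢
    omega
  · have hA_pos : 0 < A.ncard :=
      (Set.ncard_pos).mpr <| Set.nonempty_iff_ne_empty.mpr fun h =>
        Setoid.empty_notMem_classes (h ▸ hA)
    rw [Set.insert_eq_of_mem hA]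
    simp only [numBlocks] at hle ⊢
    omega

theorem whitney_second_general (n : ℕ) (k : ℕ) (hk : k ≤ n) :
    Nat.card {x : Emb n // erank n x.val = k} =
      Nat.card {P : Setoid (Fin (n + 1)) // numBlocks P = n + 1 - k} :=
  Nat.card_congr <| (embEquiv n).subtypeEquiv fun x => by
    change erank n x.val = k ↔ numBlocks (adjoinZero x.val) = n + 1 - k
    have := numBlocks_adjoinZero_add_erank x.2
    omega

theorem whitney_second (n : ℕ) (hn : 1 ≤ n) (k : ℕ) (hk : k ≤ n) :
    Nat.card {x : Emb n // erank n x.val = k} =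
      Nat.card {P : Setoid (Fin (n + 1)) // numBlocks P = n + 1 - k} :=
  whitney_second_general n k hk
end
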